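/- arXiv:1112.0588 — 8 statements merged into one kernel-verified Lean document; each statement's English description precedes it below -/
import Mathlib

section
/- Let φ be concave on [0,1] with φ(1) = 0, φ three times differentiable on (0,1] with φ''' ≥ 0. Then for all x ∈ [0,1): φ'(x) + φ'(1) ≥ −2φ(x)/(1−x). -/
open Set

theorem stmt5 (φ φ' φ'' φ''' : ℝ → ℝ)
    (hconc : ConcaveOn ℝ (Set.Icc 0 1) φ)
    (hφ1 : φ 1 = 0)
    (hd1 : ∀ x ∈ Set.Icc (0:ℝ) 1, HasDerivWithinAt φ (φ' x) (Set.Icc 0 1) x)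
    (hd2 : ∀ x ∈ Set.Ioc (0:ℝ) 1, HasDerivWithinAt φ' (φ'' x) (Set.Icc 0 1) x)
    (hd3 : ∀ x ∈ Set.Ioc (0:ℝ) 1, HasDerivWithinAt φ'' (φ''' x) (Set.Icc 0 1) x)
    (hcont2 : ContinuousOn φ'' (Set.Ioc 0 1))
    (hppp : ∀ x ∈ Set.Ioc (0:ℝ) 1, 0 ≤ φ''' x) :
    ∀ x ∈ Set.Ico (0:ℝ) 1, φ' x + φ' 1 ≥ -2 * φ x / (1 - x) := by
  set k : ℝ → ℝ := fun x => (1 - x) * (φ' x + φ' 1) + 2 * φ x with hk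
  set k' : ℝ → ℝ := fun x => (1 - x) * φ'' x + φ' x - φ' 1 with hk'
  -- derivatives at interior points
  have hda : ∀ x ∈ Ioo (0:ℝ) 1, HasDerivAt k (k' x) x := by
    intro x hx
    have hmem : Icc (0:ℝ) 1 ∈ nhds x := Icc_mem_nhds hx.1 hx.2
    have h0 : HasDerivAt φ (φ' x) x := (hd1 x (Ioo_subset_Icc_self hx)).hasDerivAt hmem
    have h2 : HasDerivAt φ' (φ'' x) x :=
      (hd2 x ⟨hx.1, hx.2.le⟩).hasDerivAt hmem
    have : HasDerivAt (fun y => (1 - y) * (φ' y + φ' 1) + 2 * φ y)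
        ((-1) * (φ' x + φ' 1) + (1 - x) * φ'' x + 2 * φ' x) x := by
      exact (((hasDerivAt_id x).const_sub 1).mul (h2.add_const (φ' 1))).add (h0.const_mul 2)
    convert this using 1
    simp [hk']; ring
  have hda' : ∀ x ∈ Ioo (0:ℝ) 1, HasDerivAt k' ((1 - x) * φ''' x) x := by
    intro x hx
    have hmem : Icc (0:ℝ) 1 ∈ nhds x := Icc_mem_nhds hx.1 hx.2
    have h2 : HasDerivAt φ' (φ'' x) x := (hd2 x ⟨hx.1, hx.2.le⟩).hasDerivAt hmem
    have h3 : HasDerivAt φ'' (φ''' x) x := (hd3 x ⟨hx.1, hx.2.le⟩).hasDerivAt hmem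
    have : HasDerivAt (fun y => (1 - y) * φ'' y + φ' y - φ' 1)
        ((-1) * φ'' x + (1 - x) * φ''' x + φ'' x) x := by
      exact ((((hasDerivAt_id x).const_sub 1).mul h3).add h2).sub_const (φ' 1)
    convert this using 1
    ring
  -- continuity of φ' on Ioc 0 1
  have hφ'cont : ContinuousOn φ' (Ioc 0 1) := fun y hy =>
    ((hd2 y hy).continuousWithinAt).mono Ioc_subset_Icc_self
  have hφcont : ContinuousOn φ (Icc 0 1) := fun y hy => (hd1 y hy).continuousWithinAt
  -- key nonnegativity of k on (0,1]
  have key : ∀ x ∈ Ioc (0:ℝ) 1, 0 ≤ k x := by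
    intro a ha
    have hsub : Icc a 1 ⊆ Icc (0:ℝ) 1 := Icc_subset_Icc ha.1.le le_rfl
    have hsub2 : Icc a 1 ⊆ Ioc (0:ℝ) 1 := fun y hy => ⟨lt_of_lt_of_le ha.1 hy.1, hy.2⟩
    have hint : interior (Icc a (1:ℝ)) = Ioo a 1 := interior_Icc
    have hintsub : Ioo a (1:ℝ) ⊆ Ioo 0 1 := fun y hy => ⟨lt_trans ha.1 hy.1, hy.2⟩
    -- k' is monotone on Icc a 1
    have hk'cont : ContinuousOn k' (Icc a 1) := by
      exact (((continuousOn_const.sub continuousOn_id).mul (hcont2.mono hsub2)).add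
        (hφ'cont.mono hsub2)).sub continuousOn_const
    have hmono : MonotoneOn k' (Icc a 1) := by
      apply monotoneOn_of_hasDerivWithinAt_nonneg (convex_Icc a 1) hk'cont
        (f' := fun x => (1 - x) * φ''' x)
      · intro x hx
        rw [hint] at hx
        exact (hda' x (hintsub hx)).hasDerivWithinAt
      · intro x hx
        rw [hint] at hx
        exact mul_nonneg (by linarith [hx.2]) (hppp x ⟨lt_trans ha.1 hx.1, hx.2.le⟩)
    have hk'1 : k' 1 = 0 := by simp [hk']
    have hk'np : ∀ x ∈ interior (Icc a (1:ℝ)), k' x ≤ 0 := by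
      intro x hx
      rw [hint] at hx
      have := hmono ⟨hx.1.le, hx.2.le⟩ (right_mem_Icc.2 ha.2) hx.2.le
      linarith [hk'1 ▸ this]
    -- k is antitone on Icc a 1
    have hkcont : ContinuousOn k (Icc a 1) := by
      exact ((continuousOn_const.sub continuousOn_id).mul
        (((hφ'cont.mono hsub2)).add continuousOn_const)).add
        (continuousOn_const.mul (hφcont.mono hsub))
    have hanti : AntitoneOn k (Icc a 1) := by
      apply antitoneOn_of_hasDerivWithinAt_nonpos (convex_Icc a 1) hkcont (f' := k')
      · intro x hx
        rw [hint] at hx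
        exact (hda x (hintsub hx)).hasDerivWithinAt
      · exact hk'np
    have hk1 : k 1 = 0 := by simp [hk, hφ1]
    have := hanti (left_mem_Icc.2 ha.2) (right_mem_Icc.2 ha.2) ha.2
    linarith [hk1 ▸ this]
  -- main conclusion
  intro x hx
  rcases eq_or_lt_of_le hx.1 with h0 | h0
  · -- x = 0 : limiting argument
    subst h0
    have hlim : Filter.Tendsto (fun y => -2 * φ y / (1 - y)) (nhdsWithin 0 (Ioo (0:ℝ) 1))
        (nhds (-2 * φ 0 / (1 - 0))) := by
      have hc : ContinuousWithinAt φ (Ioo 0 1) 0 :=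
        (hφcont 0 (left_mem_Icc.2 one_pos.le)).mono Ioo_subset_Icc_self
      exact ((continuousWithinAt_const.mul hc).div
        (continuousWithinAt_const.sub continuousWithinAt_id) (by norm_num))
    haveI : (nhdsWithin (0:ℝ) (Ioo 0 1)).NeBot := by
      rw [← mem_closure_iff_nhdsWithin_neBot, closure_Ioo (by norm_num : (0:ℝ) ≠ 1)]
      exact left_mem_Icc.2 one_pos.le
    refine ge_iff_le.2 (le_of_tendsto hlim ?_)
    filter_upwards [self_mem_nhdsWithin] with y hy
    have hyIoc : y ∈ Ioc (0:ℝ) 1 := ⟨hy.1, hy.2.le⟩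
    have hky := key y hyIoc
    have h1y : (0:ℝ) < 1 - y := by linarith [hy.2]
    -- φ' y ≤ φ' 0 by concavity
    have h0m : (0:ℝ) ∈ Icc (0:ℝ) 1 := left_mem_Icc.2 one_pos.le
    have hym : y ∈ Icc (0:ℝ) 1 := ⟨hy.1.le, hy.2.le⟩
    have hs1 : φ' y ≤ slope φ 0 y :=
      hconc.le_slope_of_hasDerivWithinAt h0m hym hy.1 (hd1 y hym)
    have hs2 : slope φ 0 y ≤ φ' 0 :=
      hconc.slope_le_of_hasDerivWithinAt h0m hym hy.1 (hd1 0 h0m)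
    have hle : φ' y ≤ φ' 0 := hs1.trans hs2
    rw [div_le_iff₀ h1y]
    have : -2 * φ y ≤ (1 - y) * (φ' y + φ' 1) := by
      simp only [hk] at hky; linarith
    nlinarith
  · -- x > 0 : direct
    have hky := key x ⟨h0, hx.2.le⟩
    have h1x : (0:ℝ) < 1 - x := by linarith [hx.2]
    rw [ge_iff_le, div_le_iff₀ h1x]
    simp only [hk] at hky
    nlinarith
end

section
/- Let ψ be convex on [0,1] with ψ(1) = 0, C³ on (0,1] with ψ''' ≤ 0. Then for all x ∈ [0,1): ψ'(x) + ψ'(1) ≤ −2ψ(x)/(1−x). -/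
open Set

theorem stmt6 (ψ ψ' ψ'' ψ''' : ℝ → ℝ)
    (hconv : ConvexOn ℝ (Set.Icc 0 1) ψ)
    (hφ1 : ψ 1 = 0)
    (hd1 : ∀ x ∈ Set.Icc (0:ℝ) 1, HasDerivWithinAt ψ (ψ' x) (Set.Icc 0 1) x)
    (hd2 : ∀ x ∈ Set.Ioc (0:ℝ) 1, HasDerivWithinAt ψ' (ψ'' x) (Set.Icc 0 1) x)
    (hd3 : ∀ x ∈ Set.Ioc (0:ℝ) 1, HasDerivWithinAt ψ'' (ψ''' x) (Set.Icc 0 1) x)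
    (hcont2 : ContinuousOn ψ'' (Set.Ioc 0 1))
    (hppp : ∀ x ∈ Set.Ioc (0:ℝ) 1, ψ''' x ≤ 0) :
    ∀ x ∈ Set.Ico (0:ℝ) 1, ψ' x + ψ' 1 ≤ -2 * ψ x / (1 - x) := by
  -- auxiliary functions
  set K : ℝ → ℝ := fun x => (1 - x) * (ψ' x + ψ' 1) + 2 * ψ x with hK
  set K' : ℝ → ℝ := fun x => (1 - x) * ψ'' x + ψ' x - ψ' 1 with hK'
  -- continuity facts
  have hψc : ContinuousOn ψ (Set.Icc 0 1) := fun x hx => (hd1 x hx).continuousWithinAt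
  have hψ'c : ContinuousOn ψ' (Set.Ioc 0 1) := fun x hx =>
    ((hd2 x hx).continuousWithinAt).mono Ioc_subset_Icc_self
  -- key claim: K x ≤ 0 for x ∈ Ioo 0 1
  have key : ∀ a ∈ Set.Ioo (0:ℝ) 1, K a ≤ 0 := by
    intro a ha
    have ha01 : Set.Icc a 1 ⊆ Set.Ioc (0:ℝ) 1 := fun y hy => ⟨lt_of_lt_of_le ha.1 hy.1, hy.2⟩
    have haI : Set.Icc a 1 ⊆ Set.Icc (0:ℝ) 1 := fun y hy => ⟨le_of_lt (lt_of_lt_of_le ha.1 hy.1), hy.2⟩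
    have hint : interior (Set.Icc a 1) = Set.Ioo a 1 := interior_Icc
    have hIoo : Set.Ioo a 1 ⊆ Set.Ioc (0:ℝ) 1 := fun y hy => ⟨lt_trans ha.1 hy.1, le_of_lt hy.2⟩
    have hIooI : Set.Ioo a 1 ⊆ Set.Icc (0:ℝ) 1 := fun y hy => haI ⟨le_of_lt hy.1, le_of_lt hy.2⟩
    -- K' has derivative (1-x)*ψ''' x on Ioo a 1
    have hK'd : ∀ x ∈ Set.Ioo a 1, HasDerivWithinAt K' ((1 - x) * ψ''' x) (Set.Ioo a 1) x := by
      intro x hx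
      have h2 : HasDerivWithinAt ψ' (ψ'' x) (Set.Ioo a 1) x := (hd2 x (hIoo hx)).mono hIooI
      have h3 : HasDerivWithinAt ψ'' (ψ''' x) (Set.Ioo a 1) x := (hd3 x (hIoo hx)).mono hIooI
      have hid : HasDerivWithinAt (fun y : ℝ => 1 - y) (-1) (Set.Ioo a 1) x := by
        simpa using ((hasDerivWithinAt_id x _).const_sub (1:ℝ))
      have := ((hid.mul h3).add h2).sub_const (ψ' 1)
      refine this.congr_deriv ?_
      ring
    -- K' is antitone on Icc a 1
    have hK'c : ContinuousOn K' (Set.Icc a 1) := by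
      apply ContinuousOn.sub
      apply ContinuousOn.add
      · exact (continuousOn_const.sub continuousOn_id).mul (hcont2.mono ha01)
      · exact hψ'c.mono ha01
      · exact continuousOn_const
    have hanti : AntitoneOn K' (Set.Icc a 1) := by
      apply antitoneOn_of_hasDerivWithinAt_nonpos (convex_Icc a 1) hK'c
      · intro x hx
        rw [hint] at hx ⊢
        exact hK'd x hx
      · intro x hx
        rw [hint] at hx
        have h1 : (0:ℝ) ≤ 1 - x := by linarith [hx.2]
        exact mul_nonpos_of_nonneg_of_nonpos h1 (hppp x (hIoo hx))
    -- K' 1 = 0, hence K' ≥ 0 on Icc a 1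
    have hK'1 : K' 1 = 0 := by simp [hK']
    have hK'nonneg : ∀ x ∈ Set.Icc a 1, 0 ≤ K' x := by
      intro x hx
      have := hanti hx (by constructor <;> [exact le_trans hx.1 hx.2; exact le_refl 1]) hx.2
      rw [hK'1] at this
      exact this
    -- K has derivative K' on Ioo a 1
    have hKd : ∀ x ∈ Set.Ioo a 1, HasDerivWithinAt K (K' x) (Set.Ioo a 1) x := by
      intro x hx
      have h1 : HasDerivWithinAt ψ (ψ' x) (Set.Ioo a 1) x := (hd1 x (hIooI hx)).mono hIooI
      have h2 : HasDerivWithinAt ψ' (ψ'' x) (Set.Ioo a 1) x := (hd2 x (hIoo hx)).mono hIooI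
      have hid : HasDerivWithinAt (fun y : ℝ => 1 - y) (-1) (Set.Ioo a 1) x := by
        simpa using ((hasDerivWithinAt_id x _).const_sub (1:ℝ))
      have := (hid.mul (h2.add_const (ψ' 1))).add (h1.const_mul (2:ℝ))
      refine this.congr_deriv ?_
      simp [hK']
      ring
    have hKc : ContinuousOn K (Set.Icc a 1) := by
      apply ContinuousOn.add
      · exact (continuousOn_const.sub continuousOn_id).mul ((hψ'c.mono ha01).add continuousOn_const)
      · exact (hψc.mono haI).const_smul (2:ℝ) |>.congr (fun x _ => by simp [smul_eq_mul])
    have hmono : MonotoneOn K (Set.Icc a 1) := by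
      apply monotoneOn_of_hasDerivWithinAt_nonneg (convex_Icc a 1) hKc
      · intro x hx
        rw [hint] at hx ⊢
        exact hKd x hx
      · intro x hx
        rw [hint] at hx
        exact hK'nonneg x ⟨le_of_lt hx.1, le_of_lt hx.2⟩
    have hK1 : K 1 = 0 := by simp [hK, hφ1]
    have := hmono (⟨le_refl a, le_of_lt ha.2⟩ : a ∈ Set.Icc a 1)
      (⟨le_of_lt ha.2, le_refl 1⟩ : (1:ℝ) ∈ Set.Icc a 1) (le_of_lt ha.2)
    rw [hK1] at this
    exact this
  -- now conclude
  intro x hx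
  rcases eq_or_lt_of_le hx.1 with h0 | h0
  · -- x = 0 : limit argument
    subst h0
    have hmono' : ∀ y ∈ Set.Ioo (0:ℝ) 1, ψ' 0 ≤ ψ' y := by
      intro y hy
      have hyI : y ∈ Set.Icc (0:ℝ) 1 := ⟨le_of_lt hy.1, le_of_lt hy.2⟩
      have h1 : ψ' 0 ≤ slope ψ 0 y :=
        hconv.le_slope_of_hasDerivWithinAt (by simp) hyI hy.1 (hd1 0 (by simp))
      have h2 : slope ψ 0 y ≤ ψ' y :=
        hconv.slope_le_of_hasDerivWithinAt (by simp) hyI hy.1 (hd1 y hyI)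
      linarith
    have hneB : (nhdsWithin (0:ℝ) (Set.Ioo 0 1)).NeBot := by
      rw [← mem_closure_iff_nhdsWithin_neBot, closure_Ioo one_ne_zero.symm]
      simp
    have hev : ∀ᶠ y in nhdsWithin (0:ℝ) (Set.Ioo 0 1), ψ' 0 + ψ' 1 ≤ -2 * ψ y / (1 - y) := by
      filter_upwards [self_mem_nhdsWithin] with y hy
      have h1y : (0:ℝ) < 1 - y := by linarith [hy.2]
      have hk := key y hy
      rw [le_div_iff₀ h1y]
      have := hmono' y hy
      simp only [hK] at hk
      nlinarith
    have hlim : Filter.Tendsto (fun y => -2 * ψ y / (1 - y)) (nhdsWithin (0:ℝ) (Set.Ioo 0 1))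
        (nhds (-2 * ψ 0 / (1 - 0))) := by
      have hψ0 : Filter.Tendsto ψ (nhdsWithin (0:ℝ) (Set.Ioo 0 1)) (nhds (ψ 0)) :=
        ((hψc 0 (by simp)).mono (fun y hy => ⟨le_of_lt hy.1, le_of_lt hy.2⟩)).tendsto
      have h1 : Filter.Tendsto (fun y : ℝ => -2 * ψ y) (nhdsWithin (0:ℝ) (Set.Ioo 0 1))
          (nhds (-2 * ψ 0)) := hψ0.const_mul _
      have h2 : Filter.Tendsto (fun y : ℝ => 1 - y) (nhdsWithin (0:ℝ) (Set.Ioo 0 1))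
          (nhds (1 - 0)) := (continuous_const.sub continuous_id).continuousAt.tendsto.mono_left
            nhdsWithin_le_nhds
      exact h1.div h2 (by norm_num)
    have := ge_of_tendsto hlim hev
    simpa using this
  · -- x > 0
    have hk := key x ⟨h0, hx.2⟩
    have h1x : (0:ℝ) < 1 - x := by linarith [hx.2]
    rw [le_div_iff₀ h1x]
    simp only [hK] at hk
    nlinarith
end

section
/- For p > 0 and constants a₁ ≥ 0, a₂ > 0, the function G₀(ξ) = ∫_0^1 [(1−x)/(1 + (1−x)(a₁ + a₂ξ))]^p dx satisfies the differential inequality ξ G₀'(ξ) + (p+1) G₀(ξ) ≥ (1 + a₁ + a₂ξ)^{−p} for all ξ > 0. -/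
open Set

theorem stmt8 (p a₁ a₂ : ℝ) (hp : 0 < p) (ha₁ : 0 ≤ a₁) (ha₂ : 0 < a₂)
    (G₀ : ℝ → ℝ)
    (hG₀ : ∀ ξ, G₀ ξ =
      ∫ x in (0:ℝ)..1, ((1 - x) / (1 + (1 - x) * (a₁ + a₂ * ξ))) ^ p) :
    ∀ ξ > (0:ℝ), ξ * deriv G₀ ξ + (p + 1) * G₀ ξ ≥ (1 + a₁ + a₂ * ξ) ^ (-p) := by
  set φ : ℝ → ℝ := fun v => (v / (1 + v)) ^ p with hφdef
  set H : ℝ → ℝ := fun r => ∫ v in (0:ℝ)..r, φ v with hHdef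
  have hrpow : Continuous fun x : ℝ => x ^ p :=
    continuous_iff_continuousAt.mpr fun x => Real.continuousAt_rpow_const x p (Or.inr hp.le)
  have hφcont : ContinuousOn φ (Ioi (-1 : ℝ)) := by
    apply hrpow.comp_continuousOn
    apply ContinuousOn.div continuousOn_id (by fun_prop)
    intro x hx
    simp only [mem_Ioi] at hx
    linarith
  -- closed form for G₀ on positives
  have key : ∀ ξ > (0:ℝ), G₀ ξ = (a₁ + a₂ * ξ) ^ (-(p+1)) * H (a₁ + a₂ * ξ) := by
    intro ξ hξ
    have hspos : 0 < a₁ + a₂ * ξ := by positivity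
    set s := a₁ + a₂ * ξ with hs
    rw [hG₀]
    have h1 : (∫ x in (0:ℝ)..1, ((1 - x) / (1 + (1 - x) * s)) ^ p)
        = ∫ x in (0:ℝ)..1, s ^ (-p) * φ (s * (1 - x)) := by
      apply intervalIntegral.integral_congr
      intro x hx
      rw [uIcc_of_le (by norm_num : (0:ℝ) ≤ 1)] at hx
      have h1x : 0 ≤ 1 - x := by linarith [hx.2]
      have hden : 0 < 1 + (1 - x) * s := by positivity
      have hq : (0:ℝ) ≤ (1 - x) / (1 + (1 - x) * s) := by positivity
      have harg : s * (1 - x) / (1 + s * (1 - x)) = s * ((1 - x) / (1 + (1 - x) * s)) := by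
        rw [mul_comm s (1-x)]
        field_simp
      simp only [hφdef]
      rw [harg, Real.mul_rpow hspos.le hq, ← mul_assoc, ← Real.rpow_add hspos]
      norm_num
    rw [h1, intervalIntegral.integral_const_mul]
    have h2 : (∫ x in (0:ℝ)..1, φ (s * (1 - x))) = ∫ x in (0:ℝ)..1, φ (s * x) := by
      have := intervalIntegral.integral_comp_sub_left (a := 0) (b := 1)
        (fun y => φ (s * y)) 1
      norm_num at this
      exact this
    rw [h2, intervalIntegral.integral_comp_mul_left _ hspos.ne']
    simp only [mul_zero, mul_one, smul_eq_mul]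
    rw [show -(p+1) = -p + -1 by ring, Real.rpow_add hspos, Real.rpow_neg_one]
    simp only [hHdef]
    ring
  intro ξ hξ
  have hspos : 0 < a₁ + a₂ * ξ := by positivity
  set s := a₁ + a₂ * ξ with hs
  -- derivative of H at s
  have hsub : uIcc (0:ℝ) s ⊆ Ioi (-1 : ℝ) := by
    rw [uIcc_of_le hspos.le]
    intro v hv
    simp only [mem_Ioi]
    linarith [hv.1]
  have hφints : IntervalIntegrable φ MeasureTheory.volume 0 s :=
    (hφcont.mono hsub).intervalIntegrable
  have hmeas : StronglyMeasurableAtFilter φ (nhds s) MeasureTheory.volume :=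
    hφcont.stronglyMeasurableAtFilter isOpen_Ioi s (by simp only [mem_Ioi]; linarith)
  have hφcs : ContinuousAt φ s :=
    hφcont.continuousAt (isOpen_Ioi.mem_nhds (by simp only [mem_Ioi]; linarith))
  have hHd : HasDerivAt H (φ s) s :=
    intervalIntegral.integral_hasDerivAt_right hφints hmeas hφcs
  have hu : HasDerivAt (fun t => a₁ + a₂ * t) a₂ ξ := by
    simpa using ((hasDerivAt_id ξ).const_mul a₂).const_add a₁
  have hr : HasDerivAt (fun r : ℝ => r ^ (-(p+1))) ((-(p+1)) * s ^ (-(p+1)-1)) s :=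
    Real.hasDerivAt_rpow_const (Or.inl hspos.ne')
  have hψ : HasDerivAt (fun r => r ^ (-(p+1)) * H r)
      ((-(p+1)) * s ^ (-(p+1)-1) * H s + s ^ (-(p+1)) * φ s) s := hr.mul hHd
  have hΦ : HasDerivAt (fun t => (a₁ + a₂ * t) ^ (-(p+1)) * H (a₁ + a₂ * t))
      (((-(p+1)) * s ^ (-(p+1)-1) * H s + s ^ (-(p+1)) * φ s) * a₂) ξ := by
    simpa [Function.comp_def] using hψ.comp ξ hu
  have hEq : G₀ =ᶠ[nhds ξ] fun t => (a₁ + a₂ * t) ^ (-(p+1)) * H (a₁ + a₂ * t) := by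
    filter_upwards [eventually_gt_nhds hξ] with t ht
    exact key t ht
  have hG : HasDerivAt G₀
      (((-(p+1)) * s ^ (-(p+1)-1) * H s + s ^ (-(p+1)) * φ s) * a₂) ξ :=
    hΦ.congr_of_eventuallyEq hEq
  rw [hG.deriv, key ξ hξ]
  -- abbreviations
  set A := s ^ (-(p+1)) with hAdef
  set B := (1 + s) ^ (-p) with hBdef
  set h := H s with hhdef
  have hApos : 0 < A := Real.rpow_pos_of_pos hspos _
  have hBpos : 0 < B := Real.rpow_pos_of_pos (by linarith) _
  have f1 : A * s ^ (p+1) = 1 := by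
    rw [hAdef, ← Real.rpow_add hspos, show (-(p+1) + (p+1) : ℝ) = 0 by ring,
      Real.rpow_zero]
  have f2 : s ^ (-(p+1)-1) = A / s := by
    rw [hAdef, show -(p+1)-1 = -(p+1) + -1 by ring, Real.rpow_add hspos, Real.rpow_neg_one,
      div_eq_mul_inv]
  have f3 : φ s = s ^ p * B := by
    simp only [hφdef, hBdef]
    rw [Real.div_rpow hspos.le (by linarith), Real.rpow_neg (by linarith : (0:ℝ) ≤ 1 + s),
      div_eq_mul_inv]
  have f4 : A * s ^ p = s⁻¹ := by
    rw [hAdef, ← Real.rpow_add hspos, show -(p+1) + p = -1 by ring, Real.rpow_neg_one]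
  -- lower bound on H s
  have f5 : s ^ (p+1) * B ≤ (p+1) * h := by
    have hmono : (∫ v in (0:ℝ)..s, v ^ p * B) ≤ ∫ v in (0:ℝ)..s, φ v := by
      apply intervalIntegral.integral_mono_on hspos.le
      · exact (intervalIntegral.intervalIntegrable_rpow (by left; linarith)).mul_const B
      · exact hφints
      · intro v hv
        simp only [hφdef]
        have hv0 : 0 ≤ v := hv.1
        have h1v : 0 < 1 + v := by linarith
        have : v ^ p * B = (v / (1 + s)) ^ p := by
          rw [Real.div_rpow hv0 (by linarith), hBdef,
            Real.rpow_neg (by linarith : (0:ℝ) ≤ 1 + s), div_eq_mul_inv]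
        rw [this]
        apply Real.rpow_le_rpow (by positivity) _ hp.le
        gcongr
        · linarith [hv.2]
    have hcomp : (∫ v in (0:ℝ)..s, v ^ p * B) = s ^ (p+1) / (p+1) * B := by
      rw [intervalIntegral.integral_mul_const, integral_rpow (by left; linarith)]
      rw [Real.zero_rpow (by positivity : p + 1 ≠ 0)]
      ring
    have : s ^ (p+1) / (p+1) * B ≤ h := by
      rw [← hcomp]; exact hmono
    calc s ^ (p+1) * B = (p+1) * (s ^ (p+1) / (p+1) * B) := by field_simp
      _ ≤ (p+1) * h := mul_le_mul_of_nonneg_left this (by linarith)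
  have hKB : B ≤ (p+1) * (A * h) := by
    have := mul_le_mul_of_nonneg_left f5 hApos.le
    nlinarith [f1]
  -- final arithmetic
  rw [show (1 + a₁ + a₂ * ξ : ℝ) = 1 + s by rw [hs]; ring]
  rw [f2, f3]
  have hc1 : ξ * a₂ / s ≤ 1 := (div_le_one hspos).mpr (by rw [hs]; nlinarith)
  have hc0 : 0 ≤ ξ * a₂ / s := by positivity
  have hrearr : ξ * ((-(p+1) * (A / s) * h + A * (s ^ p * B)) * a₂) + (p+1) * (A * h)
      = (ξ * a₂ / s) * (B - (p+1) * (A * h)) + (p+1) * (A * h) := by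
    have : A * (s ^ p * B) = s⁻¹ * B := by rw [← mul_assoc, f4]
    rw [this]
    field_simp
    ring
  rw [ge_iff_le, hrearr]
  nlinarith [mul_le_mul_of_nonneg_right (sub_nonneg.mpr hKB) hc0]
end

section
/- Suppose w₀ : [0,1) → (0,∞) is differentiable, decreasing, with beta-type logarithmic derivative: (d/dx) log w₀(x) = −β(x)/g(x) where g(x) = ∫_x^1 (1−β(x'))dx' > 0 and β : [0,1) → (0,∞) is continuous with lim_{x→1} β(x) = 1. Then for every z ≥ 0, lim_{x→1} w₀(x + z g(x))/w₀(x) = e^{−z}, locally uniformly in z ≥ 0. -/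
set_option maxHeartbeats 4000000

open Set Filter

lemma exp_lip_aux {a b : ℝ} (ha : a ≤ 0) (hb : b ≤ 0) :
    |Real.exp a - Real.exp b| ≤ |a - b| := by
  wlog h : b ≤ a generalizing a b
  · rw [abs_sub_comm, abs_sub_comm a b]
    exact this hb ha (le_of_not_ge h)
  have e1 : Real.exp a * Real.exp (b - a) = Real.exp b := by
    rw [← Real.exp_add]; ring_nf
  have h2 := Real.add_one_le_exp (b - a)
  have h3 := Real.exp_pos a
  have h4 : Real.exp a ≤ 1 := Real.exp_le_one_iff.2 ha
  rw [abs_of_nonneg (sub_nonneg.2 (Real.exp_le_exp.2 h)), abs_of_nonneg (sub_nonneg.2 h)]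
  nlinarith

theorem stmt9 (w₀ β g : ℝ → ℝ)
    (hβcont : ContinuousOn β (Set.Ico 0 1))
    (hβpos : ∀ x ∈ Set.Ico (0:ℝ) 1, 0 < β x)
    (hβlim : Tendsto β (nhdsWithin 1 (Set.Iio 1)) (nhds 1))
    (hg : ∀ x, g x = ∫ x' in x..1, (1 - β x'))
    (hgpos : ∀ x ∈ Set.Ico (0:ℝ) 1, 0 < g x)
    (hw₀pos : ∀ x ∈ Set.Ico (0:ℝ) 1, 0 < w₀ x)
    (hw₀anti : AntitoneOn w₀ (Set.Ico 0 1))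
    (hw₀deriv : ∀ x ∈ Set.Ico (0:ℝ) 1, HasDerivAt w₀ (-(β x / g x) * w₀ x) x) :
    ∀ Z : ℝ, 0 ≤ Z →
      TendstoUniformlyOn (fun x z => w₀ (x + z * g x) / w₀ x)
        (fun z => Real.exp (-z)) (nhdsWithin 1 (Set.Iio 1)) (Set.Icc 0 Z) := by
  intro Z hZ
  rw [Metric.tendstoUniformlyOn_iff]
  intro δ hδ
  have hZ1 : (0:ℝ) < Z + 1 := by linarith
  set ε : ℝ := min (1 / (2 * (Z + 1))) (δ / (4 * (Z + 1) ^ 2)) with hεdef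
  have hεpos : 0 < ε := lt_min (by positivity) (by positivity)
  have hεle1 : ε ≤ 1 / (2 * (Z + 1)) := min_le_left _ _
  have hεle2 : ε ≤ δ / (4 * (Z + 1) ^ 2) := min_le_right _ _
  clear_value ε
  have hε1 : ε * (Z + 1) ≤ 1 / 2 := by
    have h := mul_le_mul_of_nonneg_right hεle1 hZ1.le
    rw [div_mul_eq_mul_div, one_mul] at h
    calc ε * (Z + 1) ≤ (Z + 1) / (2 * (Z + 1)) := h
      _ = 1 / 2 := by field_simp
  have hεZ : ε * Z ≤ 1 / 2 := by nlinarith only [hε1, hεpos, hZ]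
  have hεhalf : ε ≤ 1 / 2 := by nlinarith only [hε1, hεpos, hZ]
  have hε2 : 2 * ε * Z * (Z + 1) ≤ δ / 2 := by
    have h := mul_le_mul_of_nonneg_right hεle2 (by positivity : (0:ℝ) ≤ 2 * Z * (Z + 1))
    have he : δ / (4 * (Z + 1) ^ 2) * (2 * Z * (Z + 1)) ≤ δ / 2 := by
      rw [div_mul_eq_mul_div, div_le_div_iff₀ (by positivity) (by norm_num)]
      nlinarith
    nlinarith
  -- find a left neighborhood where |β - 1| ≤ ε
  have hev : ∀ᶠ t in nhdsWithin (1:ℝ) (Iio 1), |β t - 1| ≤ ε := by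
    have := hβlim (Metric.closedBall_mem_nhds (1:ℝ) hεpos)
    filter_upwards [this] with t ht
    simpa [Metric.mem_closedBall, Real.dist_eq] using ht
  obtain ⟨x₀, hx₀, hx₀sub⟩ := mem_nhdsLT_iff_exists_Ioo_subset.1 hev
  have hIoo : Ioo (max x₀ 0) 1 ∈ nhdsWithin (1:ℝ) (Iio 1) :=
    Ioo_mem_nhdsLT_of_mem ⟨max_lt hx₀ one_pos, le_refl 1⟩
  filter_upwards [hIoo] with x hx
  obtain ⟨hx0, hx1⟩ := hx
  have hx0' : 0 ≤ x := ((le_max_right x₀ 0).trans hx0.le)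
  have hxmem : x ∈ Ico (0:ℝ) 1 := ⟨hx0', hx1⟩
  have hgx : 0 < g x := hgpos x hxmem
  have hβnear : ∀ t, x ≤ t → t < 1 → |β t - 1| ≤ ε := by
    intro t h1t h2t
    exact hx₀sub ⟨lt_of_le_of_lt (le_max_left x₀ 0) (lt_of_lt_of_le hx0 h1t), h2t⟩
  -- integrability of 1 - β on [x,1]
  have hInt : IntervalIntegrable (fun t => 1 - β t) MeasureTheory.volume x 1 := by
    by_contra h
    have h0 := intervalIntegral.integral_undef h
    rw [← hg x] at h0
    exact absurd h0 (ne_of_gt hgx)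
  -- g x ≤ ε * (1 - x)
  have hgxle : g x ≤ ε * (1 - x) := by
    have hae : ∀ᵐ t : ℝ, t ∈ Set.uIoc x 1 → ‖(1:ℝ) - β t‖ ≤ ε := by
      have h1 : ∀ᵐ t : ℝ, t ≠ 1 := by
        rw [MeasureTheory.ae_iff]
        simpa using Real.volume_singleton
      filter_upwards [h1] with t ht hmem
      rw [uIoc_of_le hx1.le] at hmem
      have ht1 : t < 1 := lt_of_le_of_ne hmem.2 ht
      have := hβnear t hmem.1.le ht1
      rw [Real.norm_eq_abs, abs_sub_comm]
      exact this
    have h2 : |g x| ≤ ε * |1 - x| := by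
      rw [hg x, ← Real.norm_eq_abs]
      exact intervalIntegral.norm_integral_le_of_norm_le_const_ae hae
    rw [abs_of_pos hgx, abs_of_pos (by linarith : (0:ℝ) < 1 - x)] at h2
    exact h2
  intro z hz
  obtain ⟨hz0, hzZ⟩ := hz
  set b := x + z * g x with hbdef
  clear_value b
  have hzg : z * g x ≤ Z * g x := by nlinarith only [hzZ, hgx, hz0]
  have hb1 : b < 1 := by
    have h1x : 0 < 1 - x := by linarith
    have h2 : Z * g x ≤ Z * (ε * (1 - x)) := by nlinarith only [hgxle, hZ]
    have h3 : ε * Z * (1 - x) ≤ (1/2) * (1 - x) := by nlinarith only [hεZ, h1x]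
    simp only [hbdef]
    nlinarith only [hzg, h2, h3, h1x]
  have hxb : x ≤ b := by rw [hbdef]; nlinarith only [mul_nonneg hz0 hgx.le]
  -- key pointwise estimates on [x, b]
  have key : ∀ t ∈ Icc x b,
      (1 - ε * Z) * g x ≤ g t ∧ g t ≤ (1 + ε * Z) * g x ∧ 1 - ε ≤ β t ∧ β t ≤ 1 + ε := by
    intro t ht
    obtain ⟨htx, htb⟩ := ht
    have ht1 : t < 1 := lt_of_le_of_lt htb hb1
    have hβt := abs_le.1 (hβnear t htx ht1)
    have hI1 : IntervalIntegrable (fun t => 1 - β t) MeasureTheory.volume x t :=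
      hInt.mono_set (by rw [uIcc_of_le htx, uIcc_of_le hx1.le]; exact Icc_subset_Icc_right ht1.le)
    have hI2 : IntervalIntegrable (fun t => 1 - β t) MeasureTheory.volume t 1 :=
      hInt.mono_set (by rw [uIcc_of_le ht1.le, uIcc_of_le hx1.le]; exact Icc_subset_Icc_left htx)
    have hsplit := intervalIntegral.integral_add_adjacent_intervals hI1 hI2
    have hgt : g t = g x - ∫ x' in x..t, (1 - β x') := by
      rw [hg t, hg x, ← hsplit]; ring
    have hbound : |∫ x' in x..t, (1 - β x')| ≤ ε * (t - x) := by
      have h1 : ∀ u ∈ Set.uIoc x t, ‖(1:ℝ) - β u‖ ≤ ε := by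
        intro u hu
        rw [uIoc_of_le htx] at hu
        have := hβnear u hu.1.le (lt_of_le_of_lt hu.2 ht1)
        rw [Real.norm_eq_abs, abs_sub_comm]
        exact this
      have h2 := intervalIntegral.norm_integral_le_of_norm_le_const h1
      rwa [Real.norm_eq_abs, abs_of_nonneg (by linarith : (0:ℝ) ≤ t - x)] at h2
    have htx2 : t - x ≤ Z * g x := by
      have h : t ≤ x + z * g x := hbdef ▸ htb
      linarith [hzg]
    have hbound2 : |∫ x' in x..t, (1 - β x')| ≤ ε * (Z * g x) := by
      refine hbound.trans ?_
      exact mul_le_mul_of_nonneg_left htx2 hεpos.le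
    have hIab := abs_le.1 hbound2
    refine ⟨by nlinarith only [hIab.1, hIab.2, hgt], by nlinarith only [hIab.1, hIab.2, hgt], by linarith [hβt.1], by linarith [hβt.2]⟩
  have h1εZ : (1:ℝ)/2 ≤ 1 - ε * Z := by linarith
  have hden1 : (0:ℝ) < (1 + ε * Z) * g x := mul_pos (by nlinarith only [hεpos, hZ]) hgx
  have hden2 : (0:ℝ) < (1 - ε * Z) * g x := by nlinarith only [hgx, h1εZ]
  set c₁ := (1 - ε) / ((1 + ε * Z) * g x) with hc1def
  set c₂ := (1 + ε) / ((1 - ε * Z) * g x) with hc2def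
  clear_value c₁ c₂
  have hcd : ∀ t ∈ Icc x b, c₁ ≤ β t / g t ∧ β t / g t ≤ c₂ := by
    intro t ht
    obtain ⟨h1, h2, h3, h4⟩ := key t ht
    have hgtpos : 0 < g t := by nlinarith only [h1, h1εZ, hgx]
    constructor
    · rw [hc1def, div_le_div_iff₀ hden1 hgtpos]
      nlinarith only [mul_le_mul_of_nonneg_left h2 (by linarith only [hεhalf] : (0:ℝ) ≤ 1 - ε), mul_le_mul_of_nonneg_right h3 (by positivity : (0:ℝ) ≤ (1 + ε * Z) * g x)]
    · rw [hc2def, div_le_div_iff₀ hgtpos hden2]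
      nlinarith only [mul_le_mul_of_nonneg_left h1 (by linarith only [h3, hεhalf] : (0:ℝ) ≤ β t), mul_le_mul_of_nonneg_right h4 (by nlinarith only [h1, h1εZ, hgx] : (0:ℝ) ≤ g t)]
  -- log derivative
  have hlogderiv : ∀ t ∈ Icc x b, HasDerivAt (fun u => Real.log (w₀ u)) (-(β t / g t)) t := by
    intro t ht
    have ht1 : t < 1 := lt_of_le_of_lt ht.2 hb1
    have htmem : t ∈ Ico (0:ℝ) 1 := ⟨le_trans hx0' ht.1, ht1⟩
    have hne : w₀ t ≠ 0 := ne_of_gt (hw₀pos t htmem)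
    have hw := (hw₀deriv t htmem).log hne
    convert hw using 1
    rw [mul_div_assoc, div_self hne, mul_one]
  have hF : ∀ c : ℝ, ∀ t ∈ Icc x b,
      HasDerivAt (fun u => Real.log (w₀ u) + c * u) (c - β t / g t) t := by
    intro c t ht
    have h1 := hlogderiv t ht
    have h2 : HasDerivAt (fun u : ℝ => c * u) c t := by
      simpa using (hasDerivAt_id t).const_mul c
    have h3 := h1.add h2
    rw [show c - β t / g t = -(β t / g t) + c by ring]
    exact h3
  have hFmono : MonotoneOn (fun u => Real.log (w₀ u) + c₂ * u) (Icc x b) := by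
    apply monotoneOn_of_deriv_nonneg (convex_Icc x b)
    · exact fun t ht => (hF c₂ t ht).continuousAt.continuousWithinAt
    · exact fun t ht => (hF c₂ t (interior_subset ht)).differentiableAt.differentiableWithinAt
    · intro t ht
      rw [(hF c₂ t (interior_subset ht)).deriv]
      have := (hcd t (interior_subset ht)).2
      linarith
  have hGanti : AntitoneOn (fun u => Real.log (w₀ u) + c₁ * u) (Icc x b) := by
    apply antitoneOn_of_deriv_nonpos (convex_Icc x b)
    · exact fun t ht => (hF c₁ t ht).continuousAt.continuousWithinAt
    · exact fun t ht => (hF c₁ t (interior_subset ht)).differentiableAt.differentiableWithinAt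
    · intro t ht
      rw [(hF c₁ t (interior_subset ht)).deriv]
      have := (hcd t (interior_subset ht)).1
      linarith
  have hxmem' : x ∈ Icc x b := ⟨le_refl x, hxb⟩
  have hbmem' : b ∈ Icc x b := ⟨hxb, le_refl b⟩
  have h2 := hFmono hxmem' hbmem' hxb
  have h3 := hGanti hxmem' hbmem' hxb
  set L := Real.log (w₀ b) - Real.log (w₀ x) with hLdef
  clear_value L
  have h2' : Real.log (w₀ x) + c₂ * x ≤ Real.log (w₀ b) + c₂ * b := h2
  have h3' : Real.log (w₀ b) + c₁ * b ≤ Real.log (w₀ x) + c₁ * x := h3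
  have hne1 : ((1:ℝ) - ε * Z) ≠ 0 := ne_of_gt (by linarith)
  have hne2 : ((1:ℝ) + ε * Z) ≠ 0 := ne_of_gt (by nlinarith only [hεpos, hZ])
  have hba : b - x = z * g x := by rw [hbdef]; ring
  have hlo : -(z * ((1 + ε) / (1 - ε * Z))) ≤ L := by
    have h4 : L ≥ -(c₂ * (b - x)) := by rw [hLdef]; nlinarith only [h2']
    have h5 : c₂ * (b - x) = z * ((1 + ε) / (1 - ε * Z)) := by
      rw [hba, hc2def]
      field_simp
    linarith
  have hup : L ≤ -(z * ((1 - ε) / (1 + ε * Z))) := by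
    have h4 : L ≤ -(c₁ * (b - x)) := by rw [hLdef]; nlinarith only [h3']
    have h5 : c₁ * (b - x) = z * ((1 - ε) / (1 + ε * Z)) := by
      rw [hba, hc1def]
      field_simp
    linarith
  have hq2 : (1 + ε) / (1 - ε * Z) ≤ 1 + 2 * ε * (Z + 1) := by
    rw [div_le_iff₀ (by linarith)]
    nlinarith only [hεpos, hZ, mul_le_mul_of_nonneg_right (by linarith only [hεZ] : 2 * (ε * Z) ≤ 1)
      (mul_nonneg hεpos.le (by linarith only [hZ] : (0:ℝ) ≤ Z + 1))]
  have hq1 : 1 - ε * (Z + 1) ≤ (1 - ε) / (1 + ε * Z) := by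
    rw [le_div_iff₀ (by nlinarith only [hεpos, hZ])]
    nlinarith only [hεpos, hZ, mul_nonneg (mul_nonneg (mul_nonneg hεpos.le hεpos.le) hZ)
      (by linarith only [hZ] : (0:ℝ) ≤ Z + 1)]
  have hq1' : (0:ℝ) ≤ (1 - ε) / (1 + ε * Z) :=
    div_nonneg (by linarith only [hεhalf]) (by nlinarith only [hεpos, hZ])
  have hL0 : L ≤ 0 := hup.trans (neg_nonpos.2 (mul_nonneg hz0 hq1'))
  have habs : |L + z| ≤ 2 * ε * Z * (Z + 1) := by
    rw [abs_le]
    constructor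
    · have ha1 := mul_le_mul_of_nonneg_left hq2 hz0
      nlinarith only [ha1, hlo, hz0, hzZ, hεpos, hZ, mul_le_mul_of_nonneg_right hzZ
        (by nlinarith only [hεpos, hZ] : (0:ℝ) ≤ 2 * ε * (Z + 1))]
    · have ha2 := mul_le_mul_of_nonneg_left hq1 hz0
      nlinarith only [ha2, hup, hz0, hzZ, hεpos, hZ,
        mul_nonneg (mul_nonneg hεpos.le hZ) hZ, mul_nonneg hεpos.le hZ,
        mul_le_mul_of_nonneg_right hzZ
        (by nlinarith only [hεpos, hZ] : (0:ℝ) ≤ ε * (Z + 1))]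
  have hLz : |L + z| ≤ δ / 2 := habs.trans hε2
  have hwb : 0 < w₀ b := hw₀pos b ⟨le_trans hx0' hxb, hb1⟩
  have hwx : 0 < w₀ x := hw₀pos x hxmem
  have hratio : w₀ b / w₀ x = Real.exp L := by
    rw [hLdef, Real.exp_sub, Real.exp_log hwb, Real.exp_log hwx]
  rw [hratio, Real.dist_eq]
  have hlip := exp_lip_aux (neg_nonpos.2 hz0) hL0
  have heq : |(-z) - L| = |L + z| := by
    rw [abs_sub_comm]
    congr 1
    ring
  rw [heq] at hlip
  calc |Real.exp (-z) - Real.exp L| ≤ |L + z| := hlip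
    _ ≤ δ / 2 := hLz
    _ < δ := by linarith
end

section
/- Let φ, ψ : [0,1] → ℝ be quadratic with φ(x) = φ'(1)x(x−1), ψ(x) = ψ'(1)(x−1) + ψ''(1)(x−1)²/2, where −1 < φ'(1) < 0, ψ'(1) < 0, ψ''(1) ≥ 0. Let κ : [0,∞) → (0,∞) be continuous, u(t) = exp(∫_0^t (φ'(1) − ψ'(1)κ(s))ds), v(t) = ∫_0^t u(s)ds, and a(t) = {ψ''(1)(u(t)−1) + |φ'(1)|(ψ''(1)−2ψ'(1))v(t)}/(2|ψ'(1)|). Then F(x,t) := 1 − (1−x)/(u(t) + a(t)(1−x)) solves the PDE ∂F/∂t + (φ(x) − κ(t)ψ(x)) ∂F/∂x = 0 with F(x,0) = x, for 0 ≤ x < 1, t ≥ 0. -/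
open Set

theorem stmt10 (p1 q1 q2 : ℝ) (hp1 : -1 < p1) (hp1' : p1 < 0) (hq1 : q1 < 0) (hq2 : 0 ≤ q2)
    (φ ψ : ℝ → ℝ)
    (hφ : ∀ x, φ x = p1 * x * (x - 1))
    (hψ : ∀ x, ψ x = q1 * (x - 1) + q2 * (x - 1) ^ 2 / 2)
    (κ : ℝ → ℝ) (hκcont : Continuous κ) (hκpos : ∀ t ≥ (0:ℝ), 0 < κ t)
    (u v a : ℝ → ℝ)
    (hu : ∀ t, u t = Real.exp (∫ s in (0:ℝ)..t, (p1 - q1 * κ s)))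
    (hv : ∀ t, v t = ∫ s in (0:ℝ)..t, u s)
    (ha : ∀ t, a t = (q2 * (u t - 1) + |p1| * (q2 - 2 * q1) * v t) / (2 * |q1|))
    (F : ℝ → ℝ → ℝ)
    (hF : ∀ x t, F x t = 1 - (1 - x) / (u t + a t * (1 - x))) :
    (∀ x, F x 0 = x) ∧
    (∀ x ∈ Set.Ico (0:ℝ) 1, ∀ t ≥ (0:ℝ), ∃ Ft Fx : ℝ,
      HasDerivAt (fun s => F x s) Ft t ∧
      HasDerivAt (fun y => F y t) Fx x ∧
      Ft + (φ x - κ t * ψ x) * Fx = 0) := by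
  have habsp : |p1| = -p1 := abs_of_neg hp1'
  have habsq : |q1| = -q1 := abs_of_neg hq1
  have hgc : Continuous (fun s => p1 - q1 * κ s) :=
    continuous_const.sub (continuous_const.mul hκcont)
  -- derivative of u
  have huD : ∀ t, HasDerivAt u ((p1 - q1 * κ t) * u t) t := by
    intro t
    have h1 : HasDerivAt (fun t => ∫ s in (0:ℝ)..t, (p1 - q1 * κ s)) (p1 - q1 * κ t) t :=
      intervalIntegral.integral_hasDerivAt_right (hgc.intervalIntegrable 0 t)
        (hgc.stronglyMeasurableAtFilter _ _) hgc.continuousAt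
    have h2 := h1.exp
    have hue : u = fun t => Real.exp (∫ s in (0:ℝ)..t, (p1 - q1 * κ s)) := funext hu
    rw [hue]
    simpa [mul_comm] using h2
  have hupos : ∀ t, 0 < u t := fun t => (hu t) ▸ Real.exp_pos _
  have hudiff : Differentiable ℝ u := fun t => (huD t).differentiableAt
  have hucont : Continuous u := hudiff.continuous
  -- derivative of v
  have hvD : ∀ t, HasDerivAt v (u t) t := by
    intro t
    have h1 : HasDerivAt (fun t => ∫ s in (0:ℝ)..t, u s) (u t) t :=
      intervalIntegral.integral_hasDerivAt_right (hucont.intervalIntegrable 0 t)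
        (hucont.stronglyMeasurableAtFilter _ _) hucont.continuousAt
    have hve : v = fun t => ∫ s in (0:ℝ)..t, u s := funext hv
    rw [hve]; exact h1
  -- derivative of a
  have haD : ∀ t, HasDerivAt a (u t * (q2 * κ t - 2 * p1) / 2) t := by
    intro t
    have hae : a = fun t => (q2 * (u t - 1) + |p1| * (q2 - 2 * q1) * v t) / (2 * |q1|) :=
      funext ha
    have h1 : HasDerivAt (fun t => (q2 * (u t - 1) + |p1| * (q2 - 2 * q1) * v t) / (2 * |q1|))
        ((q2 * ((p1 - q1 * κ t) * u t) + |p1| * (q2 - 2 * q1) * u t) / (2 * |q1|)) t :=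
      ((((huD t).sub_const 1).const_mul q2).add ((hvD t).const_mul _)).div_const _
    rw [hae]
    convert h1 using 1
    rw [habsp, habsq]
    field_simp [hq1.ne]
    ring
  -- a is nonnegative for t ≥ 0
  have hu0 : u 0 = 1 := by rw [hu]; simp
  have ha0 : a 0 = 0 := by rw [ha, hu0, hv]; simp
  have hanneg : ∀ t ≥ (0:ℝ), 0 ≤ a t := by
    intro t ht
    have hmono : MonotoneOn a (Ici (0:ℝ)) := by
      have hadiff : Differentiable ℝ a := fun s => (haD s).differentiableAt
      apply monotoneOn_of_deriv_nonneg (convex_Ici 0) (hadiff.continuous.continuousOn)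
        (fun s _ => (hadiff s).differentiableWithinAt)
      intro s hs
      rw [(haD s).deriv]
      have hs0 : (0:ℝ) < s := by simpa using hs
      have h1 : 0 ≤ q2 * κ s := mul_nonneg hq2 (hκpos s hs0.le).le
      have h2 := hupos s
      nlinarith
    calc (0:ℝ) = a 0 := ha0.symm
    _ ≤ a t := hmono self_mem_Ici ht ht
  constructor
  · intro x
    rw [hF, hu0, ha0]
    ring
  · intro x hx t ht
    have h1x : 0 < 1 - x := by linarith [hx.2]
    have hD : 0 < u t + a t * (1 - x) := by
      have := hanneg t ht
      nlinarith [hupos t]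
    have hden : HasDerivAt (fun s => u s + a s * (1 - x))
        ((p1 - q1 * κ t) * u t + (u t * (q2 * κ t - 2 * p1) / 2) * (1 - x)) t :=
      (huD t).add ((haD t).mul_const _)
    have hFt := ((hasDerivAt_const t (1 - x)).div hden hD.ne').const_sub 1
    have hFteq : (fun s => F x s) = fun s => 1 - (1 - x) / (u s + a s * (1 - x)) :=
      funext fun s => hF x s
    simp only [Pi.div_apply] at hFt
    rw [← hFteq] at hFt
    have hnum : HasDerivAt (fun y : ℝ => 1 - y) (-1) x := (hasDerivAt_id x).const_sub 1
    have hden2 : HasDerivAt (fun y => u t + a t * (1 - y)) (a t * -1) x :=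
      (hnum.const_mul (a t)).const_add (u t)
    have hFx := (hnum.div hden2 hD.ne').const_sub 1
    have hFxeq : (fun y => F y t) = fun y => 1 - (1 - y) / (u t + a t * (1 - y)) :=
      funext fun y => hF y t
    simp only [Pi.div_apply] at hFx
    rw [← hFxeq] at hFx
    refine ⟨_, _, hFt, hFx, ?_⟩
    rw [hφ, hψ]
    field_simp
    ring
end

section
/- Let F : [0,1) → [0,1) be convex increasing, and suppose c₀, w₀, h₀ are related by w₀ = −h₀', c₀ = −w₀' with w₀, h₀ > 0, and define β₀(x) = c₀(x)h₀(x)/w₀(x)². Define the transported functions w(x) = e^t w₀(F(x)) etc., with c(x) = −w'(x), h(x) = ∫_x^1 w, and β(x) = c(x)h(x)/w(x)². Then in the special case where F is affine, β(x) = β₀(F(x)) for all x; and convexity of F implies the inequality β(x) ≤ β₀(F(x)) provided β₀ is the beta function of the initial data and the chain-rule/monotonicity estimates (F'(x') ≥ F'(x) for x' ≥ x) hold. -/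
open Set Filter

theorem stmt16 (w₀ h₀ c₀ β₀ : ℝ → ℝ)
    (hw₀d : ∀ x ∈ Set.Ico (0:ℝ) 1, HasDerivAt h₀ (-(w₀ x)) x)
    (hc₀d : ∀ x ∈ Set.Ico (0:ℝ) 1, HasDerivAt w₀ (-(c₀ x)) x)
    (hh₀ : ∀ x, h₀ x = ∫ s in x..1, w₀ s)
    (hw₀pos : ∀ x ∈ Set.Ico (0:ℝ) 1, 0 < w₀ x)
    (hh₀pos : ∀ x ∈ Set.Ico (0:ℝ) 1, 0 < h₀ x)
    (hc₀nn : ∀ x ∈ Set.Ico (0:ℝ) 1, 0 ≤ c₀ x)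
    (hc₀cont : ContinuousOn c₀ (Set.Ico 0 1))
    (hβ₀ : ∀ x, β₀ x = c₀ x * h₀ x / (w₀ x) ^ 2)
    (F F' : ℝ → ℝ)
    (hFconv : ConvexOn ℝ (Set.Ico 0 1) F)
    (hFmono : MonotoneOn F (Set.Ico 0 1))
    (hFmaps : Set.MapsTo F (Set.Ico 0 1) (Set.Ico 0 1))
    (hFlim : Tendsto F (nhdsWithin 1 (Set.Iio 1)) (nhds 1))
    (hFd : ∀ x ∈ Set.Ico (0:ℝ) 1, HasDerivAt F (F' x) x)
    (hF'pos : ∀ x ∈ Set.Ico (0:ℝ) 1, 0 < F' x)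
    (t : ℝ) (w c h β : ℝ → ℝ)
    (hw : ∀ x, w x = Real.exp t * w₀ (F x))
    (hc : ∀ x ∈ Set.Ico (0:ℝ) 1, c x = Real.exp t * c₀ (F x) * F' x)
    (hh : ∀ x, h x = ∫ s in x..1, w s)
    (hβ : ∀ x, β x = c x * h x / (w x) ^ 2) :
    (∀ x ∈ Set.Ico (0:ℝ) 1, β x ≤ β₀ (F x)) ∧
    ((∃ a b : ℝ, ∀ x, F x = a * x + b) →
      ∀ x ∈ Set.Ico (0:ℝ) 1, β x = β₀ (F x)) := by
  have hE : (0:ℝ) < Real.exp t := Real.exp_pos t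
  -- F' is monotone on [0,1) by convexity
  have hF'mono : MonotoneOn F' (Set.Ico (0:ℝ) 1) := by
    intro a ha b hb hab
    rcases eq_or_lt_of_le hab with rfl | hlt
    · exact le_rfl
    · exact le_trans (hFconv.le_slope_of_hasDerivAt ha hb hlt (hFd a ha))
        (hFconv.slope_le_of_hasDerivAt ha hb hlt (hFd b hb))
  -- continuity of w₀ ∘ F on [0,1)
  have hgcont : ContinuousOn (fun s => w₀ (F s)) (Set.Ico (0:ℝ) 1) := fun s hs =>
    ((hc₀d (F s) (hFmaps hs)).continuousAt.comp (hFd s hs).continuousAt).continuousWithinAt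
  -- the key inequality
  have key : ∀ x ∈ Set.Ico (0:ℝ) 1, F' x * (∫ s in x..1, w₀ (F s)) ≤ h₀ (F x) := by
    intro x hx
    by_cases hint : IntervalIntegrable (fun s => w₀ (F s)) MeasureTheory.volume x 1
    · -- bound the integral up to y < 1 and pass to the limit
      have hbound : ∀ y ∈ Set.Ico x 1, F' x * (∫ s in x..y, w₀ (F s)) ≤ h₀ (F x) := by
        intro y hy
        have hxy : x ≤ y := hy.1
        have hsub : Set.uIcc x y ⊆ Set.Ico (0:ℝ) 1 := by
          rw [Set.uIcc_of_le hxy]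
          intro s hs
          exact ⟨le_trans hx.1 hs.1, lt_of_le_of_lt hs.2 hy.2⟩
        have hgc : ContinuousOn (fun s => w₀ (F s)) (Set.uIcc x y) := hgcont.mono hsub
        have hF'int : IntervalIntegrable F' MeasureTheory.volume x y :=
          (hF'mono.mono hsub).intervalIntegrable
        have hprod : IntervalIntegrable (fun s => w₀ (F s) * F' s) MeasureTheory.volume x y :=
          hF'int.continuousOn_mul hgc
        have hftc : (∫ s in x..y, -(w₀ (F s) * F' s)) = h₀ (F y) - h₀ (F x) := by
          apply intervalIntegral.integral_eq_sub_of_hasDerivAt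
          · intro s hs
            have hs' : s ∈ Set.Ico (0:ℝ) 1 := hsub hs
            have h2 : HasDerivAt h₀ (-(w₀ (F s))) (F s) := hw₀d (F s) (hFmaps hs')
            have h3 := h2.comp s (hFd s hs')
            simpa [neg_mul, mul_comm, Function.comp_def] using h3
          · exact hprod.neg
        have hconstint : IntervalIntegrable (fun s => w₀ (F s) * F' x)
            MeasureTheory.volume x y := (hgc.mul continuousOn_const).intervalIntegrable
        have hle : (∫ s in x..y, w₀ (F s) * F' x) ≤ ∫ s in x..y, w₀ (F s) * F' s := by
          apply intervalIntegral.integral_mono_on hxy hconstint hprod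
          intro s hs
          have hs' : s ∈ Set.Ico (0:ℝ) 1 := hsub (by rw [Set.uIcc_of_le hxy]; exact hs)
          have hwnn : 0 ≤ w₀ (F s) := (hw₀pos _ (hFmaps hs')).le
          exact mul_le_mul_of_nonneg_left (hF'mono hx hs' hs.1) hwnn
        have hle2 : (∫ s in x..y, w₀ (F s) * F' s) = h₀ (F x) - h₀ (F y) := by
          have := hftc
          rw [intervalIntegral.integral_neg] at this
          linarith
        have hhy : 0 ≤ h₀ (F y) :=
          (hh₀pos _ (hFmaps ⟨le_trans hx.1 hxy, hy.2⟩)).le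
        have hlhs : (∫ s in x..y, w₀ (F s) * F' x) = F' x * ∫ s in x..y, w₀ (F s) := by
          rw [intervalIntegral.integral_mul_const, mul_comm]
        linarith [hle, hle2, hlhs]
      -- limit as y → 1⁻
      have hx1 : x ≤ 1 := hx.2.le
      have hcontP : ContinuousOn (fun y => ∫ s in x..y, w₀ (F s)) (Set.uIcc x 1) :=
        intervalIntegral.continuousOn_primitive_interval' hint left_mem_uIcc
      have h1mem : (1:ℝ) ∈ Set.uIcc x 1 := right_mem_uIcc
      have htend : Tendsto (fun y => ∫ s in x..y, w₀ (F s)) (nhdsWithin 1 (Set.Ico x 1))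
          (nhds (∫ s in x..1, w₀ (F s))) := by
        have := (hcontP 1 h1mem).tendsto
        refine this.mono_left (le_trans (nhdsWithin_mono _ ?_) le_rfl)
        rw [Set.uIcc_of_le hx1]
        exact Set.Ico_subset_Icc_self
      have hne : (nhdsWithin (1:ℝ) (Set.Ico x 1)).NeBot := right_nhdsWithin_Ico_neBot hx.2
      refine le_of_tendsto (htend.const_mul (F' x)) ?_
      filter_upwards [eventually_mem_nhdsWithin] with y hy using hbound y hy
    · rw [intervalIntegral.integral_undef hint]
      simpa using (hh₀pos _ (hFmaps hx)).le
  -- rewriting h in terms of the integral of w₀ ∘ F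
  have hhval : ∀ x, h x = Real.exp t * ∫ s in x..1, w₀ (F s) := by
    intro x
    rw [hh]
    simp_rw [hw]
    rw [intervalIntegral.integral_const_mul]
  constructor
  · intro x hx
    have hFx := hFmaps hx
    have hW : (0:ℝ) < w₀ (F x) := hw₀pos _ hFx
    have hC : (0:ℝ) ≤ c₀ (F x) := hc₀nn _ hFx
    have hk := key x hx
    have h1 : c₀ (F x) * (F' x * ∫ s in x..1, w₀ (F s)) ≤ c₀ (F x) * h₀ (F x) :=
      mul_le_mul_of_nonneg_left hk hC
    rw [hβ, hβ₀, hc x hx, hw, hhval]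
    rw [div_le_div_iff₀ (by positivity) (by positivity)]
    nlinarith [mul_le_mul_of_nonneg_left h1
      (show (0:ℝ) ≤ Real.exp t ^ 2 * w₀ (F x) ^ 2 by positivity)]
  · rintro ⟨a, b, hab⟩ x hx
    have hF : F = fun x => a * x + b := funext hab
    have hder : ∀ y : ℝ, HasDerivAt F a y := by
      intro y
      rw [hF]
      simpa using ((hasDerivAt_id y).const_mul a).add_const b
    have hF'eq : F' x = a := (hFd x hx).unique (hder x)
    have ha : (0:ℝ) < a := hF'eq ▸ hF'pos x hx
    have hab1 : a * 1 + b = 1 := by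
      have hcont : Tendsto F (nhdsWithin 1 (Set.Iio 1)) (nhds (a * 1 + b)) := by
        rw [hF]
        exact ((continuous_const.mul continuous_id).add continuous_const).continuousAt.tendsto.mono_left
          nhdsWithin_le_nhds
      exact tendsto_nhds_unique hcont hFlim
    have hintcomp : (∫ s in x..1, w₀ (F s)) = a⁻¹ * h₀ (F x) := by
      rw [hF]
      rw [intervalIntegral.integral_comp_mul_add w₀ (ne_of_gt ha) b, hab1]
      rw [hh₀ (a * x + b)]
      simp [smul_eq_mul]
    have hFx := hFmaps hx
    have hW : (0:ℝ) < w₀ (F x) := hw₀pos _ hFx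
    rw [hβ, hβ₀, hc x hx, hw, hhval, hintcomp, hF'eq]
    field_simp
end

section
/- Let w : [0,1) × [0,∞) → (0,∞) solve ∂_t w + (φ(x) − κ(t)ψ(x)) ∂_x w = w with w(·,t) decreasing, ∫_0^1 w(x,t)dx = 1, where w(x,t) = e^t w₀(F(x,t)) and ∂_x F(x,t) ≤ e^{−tφ'(1)} for all x (with −1 < φ'(1) < 0). Then ∫_{F(0,t)}^1 w₀(z)dz ≤ exp(−t(1 + φ'(1))) for all t ≥ 0; in particular, if w₀ > 0 on [0,1), then F(0,t) → 1 as t → ∞. -/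
open Set Filter MeasureTheory Topology

theorem stmt17 (p1 : ℝ) (hp1 : -1 < p1) (hp1' : p1 < 0)
    (w₀ : ℝ → ℝ)
    (hw₀cont : ContinuousOn w₀ (Set.Ico 0 1))
    (hw₀nn : ∀ x ∈ Set.Ico (0:ℝ) 1, 0 ≤ w₀ x)
    (F F' : ℝ → ℝ → ℝ)
    (hF0 : ∀ x, F x 0 = x)
    (hFmono : ∀ t ≥ (0:ℝ), StrictMonoOn (fun x => F x t) (Set.Ico 0 1))
    (hFmaps : ∀ t ≥ (0:ℝ), Set.MapsTo (fun x => F x t) (Set.Ico 0 1) (Set.Ico 0 1))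
    (hFlim : ∀ t ≥ (0:ℝ),
      Tendsto (fun x => F x t) (nhdsWithin 1 (Set.Iio 1)) (nhds 1))
    (hFd : ∀ t ≥ (0:ℝ), ∀ x ∈ Set.Ico (0:ℝ) 1,
      HasDerivAt (fun y => F y t) (F' x t) x)
    (hF'pos : ∀ t ≥ (0:ℝ), ∀ x ∈ Set.Ico (0:ℝ) 1, 0 < F' x t)
    (hF'bd : ∀ t ≥ (0:ℝ), ∀ x ∈ Set.Ico (0:ℝ) 1, F' x t ≤ Real.exp (-t * p1))
    (hcons : ∀ t ≥ (0:ℝ), (∫ x in (0:ℝ)..1, Real.exp t * w₀ (F x t)) = 1) :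
    (∀ t ≥ (0:ℝ), (∫ z in (F 0 t)..1, w₀ z) ≤ Real.exp (-t * (1 + p1))) ∧
    ((∀ x ∈ Set.Ico (0:ℝ) 1, 0 < w₀ x) →
      Tendsto (fun t => F 0 t) atTop (nhds 1)) := by
  have h0mem : (0:ℝ) ∈ Set.Ico (0:ℝ) 1 := ⟨le_refl 0, one_pos⟩
  -- Key estimate: for every b ∈ [0,1), ∫_{F 0 t}^{F b t} w₀ ≤ exp(-t(1+p1)).
  have key : ∀ t ≥ (0:ℝ), ∀ b ∈ Set.Ico (0:ℝ) 1,
      (∫ z in (F 0 t)..(F b t), w₀ z) ≤ Real.exp (-t * (1 + p1)) := by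
    intro t ht b hb
    obtain ⟨hb0, hb1⟩ := hb
    have hsub : Set.Icc (0:ℝ) b ⊆ Set.Ico (0:ℝ) 1 :=
      fun x hx => ⟨hx.1, lt_of_le_of_lt hx.2 hb1⟩
    have huIcc : Set.uIcc (0:ℝ) b = Set.Icc (0:ℝ) b := Set.uIcc_of_le hb0
    have hfc : ContinuousOn (fun x => F x t) (Set.Icc (0:ℝ) b) :=
      fun x hx => ((hFd t ht x (hsub hx)).continuousAt).continuousWithinAt
    have hcomp : ContinuousOn (fun x => w₀ (F x t)) (Set.Icc (0:ℝ) b) := by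
      refine ContinuousOn.comp hw₀cont hfc ?_
      intro x hx
      exact hFmaps t ht (hsub hx)
    -- integrability of w₀ ∘ F on [0,1] and its value e^{-t}
    have hint : IntervalIntegrable (fun x => w₀ (F x t)) volume 0 1 := by
      by_contra h
      have h2 : ¬ IntervalIntegrable (fun x => Real.exp t * w₀ (F x t)) volume 0 1 := by
        intro h3
        have h4 := h3.const_mul (Real.exp (-t))
        apply h
        have : (fun x => Real.exp (-t) * (Real.exp t * w₀ (F x t)))
            = fun x => w₀ (F x t) := by
          funext x
          rw [← mul_assoc, ← Real.exp_add, neg_add_cancel, Real.exp_zero, one_mul]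
        rwa [this] at h4
      have := hcons t ht
      rw [intervalIntegral.integral_undef h2] at this
      norm_num at this
    have hval : (∫ x in (0:ℝ)..1, w₀ (F x t)) = Real.exp (-t) := by
      have h := hcons t ht
      rw [intervalIntegral.integral_const_mul] at h
      have h2 : Real.exp (-t) * (Real.exp t * ∫ x in (0:ℝ)..1, w₀ (F x t))
          = Real.exp (-t) := by rw [h, mul_one]
      rwa [← mul_assoc, ← Real.exp_add, neg_add_cancel, Real.exp_zero, one_mul] at h2
    -- nonnegativity a.e. on (0,1]
    have hae : (0:ℝ → ℝ) ≤ᵐ[volume.restrict (Set.Ioc (0:ℝ) 1)] fun x => w₀ (F x t) := by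
      have h1 : ∀ᵐ x ∂volume.restrict (Set.Ioc (0:ℝ) 1), x ∈ Set.Ioc (0:ℝ) 1 :=
        ae_restrict_mem measurableSet_Ioc
      have h2 : ∀ᵐ x ∂volume.restrict (Set.Ioc (0:ℝ) 1), x ≠ 1 := by
        refine ae_restrict_of_ae ?_
        have : (volume : Measure ℝ) {(1:ℝ)} = 0 := Real.volume_singleton
        have h3 := measure_eq_zero_iff_ae_notMem.1 this
        filter_upwards [h3] with x hx
        simpa using hx
      filter_upwards [h1, h2] with x hx hne
      exact hw₀nn _ (hFmaps t ht ⟨hx.1.le, lt_of_le_of_ne hx.2 hne⟩)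
    -- the substitution
    have hff' : ∀ x ∈ Set.Ioo (min (0:ℝ) b) (max (0:ℝ) b),
        HasDerivWithinAt (fun y => F y t) (F' x t) (Set.Ioi x) x := by
      intro x hx
      rw [min_eq_left hb0, max_eq_right hb0] at hx
      exact (hFd t ht x (hsub (Set.Ioo_subset_Icc_self hx))).hasDerivWithinAt
    have himage : (fun x => F x t) '' Set.Icc (0:ℝ) b ⊆ Set.Ico (0:ℝ) 1 := by
      rintro _ ⟨x, hx, rfl⟩
      exact hFmaps t ht (hsub hx)
    have hg_cont : ContinuousOn w₀
        ((fun x => F x t) '' Set.Ioo (min (0:ℝ) b) (max (0:ℝ) b)) := by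
      refine hw₀cont.mono ?_
      rw [min_eq_left hb0, max_eq_right hb0]
      exact (Set.image_mono Set.Ioo_subset_Icc_self).trans himage
    have hKcompact : IsCompact ((fun x => F x t) '' Set.Icc (0:ℝ) b) :=
      isCompact_Icc.image_of_continuousOn hfc
    have hg1 : IntegrableOn w₀ ((fun x => F x t) '' Set.uIcc (0:ℝ) b) := by
      rw [huIcc]
      exact (hw₀cont.mono himage).integrableOn_compact hKcompact
    have hg2 : IntegrableOn (fun x => F' x t • (w₀ ∘ fun y => F y t) x)
        (Set.uIcc (0:ℝ) b) := by
      rw [huIcc]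
      obtain ⟨M, hM⟩ := isCompact_Icc.exists_bound_of_continuousOn hcomp
      have hmeas1 : AEStronglyMeasurable (fun x => F' x t)
          (volume.restrict (Set.Icc (0:ℝ) b)) := by
        refine (measurable_deriv (fun y => F y t)).aestronglyMeasurable.restrict.congr ?_
        filter_upwards [ae_restrict_mem measurableSet_Icc] with x hx
        exact (hFd t ht x (hsub hx)).deriv
      have hmeas2 : AEStronglyMeasurable (fun x => w₀ (F x t))
          (volume.restrict (Set.Icc (0:ℝ) b)) :=
        hcomp.aestronglyMeasurable measurableSet_Icc
      refine ⟨?_, HasFiniteIntegral.restrict_of_bounded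
        (C := Real.exp (-t * p1) * M) measure_Icc_lt_top ?_⟩
      · exact hmeas1.mul hmeas2
      filter_upwards [ae_restrict_mem measurableSet_Icc] with x hx
      have h1 : 0 < F' x t := hF'pos t ht x (hsub hx)
      have h2 : F' x t ≤ Real.exp (-t * p1) := hF'bd t ht x (hsub hx)
      have h3 : ‖w₀ (F x t)‖ ≤ M := hM x hx
      have h4 : (0:ℝ) ≤ M := le_trans (norm_nonneg _) h3
      calc ‖F' x t • w₀ (F x t)‖ = F' x t * ‖w₀ (F x t)‖ := by
            rw [smul_eq_mul, norm_mul, Real.norm_of_nonneg h1.le]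
        _ ≤ Real.exp (-t * p1) * M := by
            exact mul_le_mul h2 h3 (norm_nonneg _) (Real.exp_pos _).le
    have hfc' : ContinuousOn (fun x => F x t) (Set.uIcc (0:ℝ) b) := huIcc ▸ hfc
    have hsubst := intervalIntegral.integral_comp_smul_deriv''' hfc' hff' hg_cont hg1 hg2
    -- Now the chain of inequalities
    have hIleft : IntervalIntegrable (fun x => F' x t • (w₀ ∘ fun y => F y t) x)
        volume 0 b := ((intervalIntegrable_iff' enorm_ne_top).2 hg2)
    have hIright : IntervalIntegrable (fun x => Real.exp (-t * p1) * w₀ (F x t))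
        volume 0 b := by
      refine ContinuousOn.intervalIntegrable ?_
      rw [huIcc]
      exact continuousOn_const.mul hcomp
    calc (∫ z in (F 0 t)..(F b t), w₀ z)
        = ∫ x in (0:ℝ)..b, F' x t • (w₀ ∘ fun y => F y t) x := hsubst.symm
      _ ≤ ∫ x in (0:ℝ)..b, Real.exp (-t * p1) * w₀ (F x t) := by
          refine intervalIntegral.integral_mono_on hb0 hIleft hIright ?_
          intro x hx
          have h2 : F' x t ≤ Real.exp (-t * p1) := hF'bd t ht x (hsub hx)
          have h3 : 0 ≤ w₀ (F x t) := hw₀nn _ (hFmaps t ht (hsub hx))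
          simpa [smul_eq_mul] using mul_le_mul_of_nonneg_right h2 h3
      _ = Real.exp (-t * p1) * ∫ x in (0:ℝ)..b, w₀ (F x t) :=
          intervalIntegral.integral_const_mul _ _
      _ ≤ Real.exp (-t * p1) * ∫ x in (0:ℝ)..1, w₀ (F x t) := by
          refine mul_le_mul_of_nonneg_left ?_ (Real.exp_pos _).le
          exact intervalIntegral.integral_mono_interval (le_refl 0) hb0 hb1.le hae hint
      _ = Real.exp (-t * (1 + p1)) := by
          rw [hval, ← Real.exp_add]
          ring_nf
  have hF0mem : ∀ t ≥ (0:ℝ), F 0 t ∈ Set.Ico (0:ℝ) 1 := fun t ht => hFmaps t ht h0mem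
  constructor
  · -- Part 1
    intro t ht
    by_cases hI : IntervalIntegrable w₀ volume (F 0 t) 1
    · have hF01 : F 0 t ≤ 1 := (hF0mem t ht).2.le
      have hprim : ContinuousOn (fun y => ∫ z in (F 0 t)..y, w₀ z)
          (Set.uIcc (F 0 t) 1) :=
        intervalIntegral.continuousOn_primitive_interval' hI Set.left_mem_uIcc
      have h1mem : (1:ℝ) ∈ Set.uIcc (F 0 t) 1 := Set.right_mem_uIcc
      have hIoo : Set.Ioo (0:ℝ) 1 ∈ nhdsWithin (1:ℝ) (Set.Iio 1) :=
        Ioo_mem_nhdsLT_of_mem ⟨one_pos, le_refl 1⟩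
      have htend2 : Tendsto (fun b => F b t) (nhdsWithin (1:ℝ) (Set.Iio 1))
          (nhdsWithin (1:ℝ) (Set.uIcc (F 0 t) 1)) := by
        rw [tendsto_nhdsWithin_iff]
        refine ⟨hFlim t ht, ?_⟩
        filter_upwards [hIoo] with b hbm
        have hbIco : b ∈ Set.Ico (0:ℝ) 1 := ⟨hbm.1.le, hbm.2⟩
        rw [Set.uIcc_of_le hF01]
        exact ⟨(hFmono t ht).monotoneOn h0mem hbIco hbm.1.le, (hFmaps t ht hbIco).2.le⟩
      have htend : Tendsto (fun b => ∫ z in (F 0 t)..(F b t), w₀ z)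
          (nhdsWithin (1:ℝ) (Set.Iio 1)) (𝓝 (∫ z in (F 0 t)..1, w₀ z)) :=
        (hprim 1 h1mem).tendsto.comp htend2
      refine le_of_tendsto htend ?_
      filter_upwards [hIoo] with b hbm
      exact key t ht b ⟨hbm.1.le, hbm.2⟩
    · rw [intervalIntegral.integral_undef hI]
      positivity
  · -- Part 2
    intro hpos
    rw [tendsto_order]
    constructor
    · intro a ha
      rcases lt_or_ge a 0 with ha0 | ha0
      · filter_upwards [eventually_ge_atTop (0:ℝ)] with t ht
        exact lt_of_lt_of_le ha0 (hF0mem t ht).1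
      · -- a ∈ [0, 1)
        set m := (a + 1) / 2 with hm
        have ham : a < m := by rw [hm]; linarith
        have hm1 : m < 1 := by rw [hm]; linarith
        have hm0 : (0:ℝ) ≤ m := by rw [hm]; linarith
        have hsubam : Set.Icc a m ⊆ Set.Ico (0:ℝ) 1 :=
          fun x hx => ⟨le_trans ha0 hx.1, lt_of_le_of_lt hx.2 hm1⟩
        have hIam : IntervalIntegrable w₀ volume a m := by
          refine ContinuousOn.intervalIntegrable ?_
          rw [Set.uIcc_of_le ham.le]
          exact hw₀cont.mono hsubam
        have hδ : 0 < ∫ z in a..m, w₀ z := by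
          refine intervalIntegral.intervalIntegral_pos_of_pos_on hIam ?_ ham
          intro x hx
          exact hpos x (hsubam (Set.Ioo_subset_Icc_self hx))
        have hexptend : Tendsto (fun t : ℝ => Real.exp (-t * (1 + p1))) atTop (𝓝 0) := by
          have h1 : Tendsto (fun t : ℝ => -t * (1 + p1)) atTop atBot :=
            tendsto_neg_atTop_atBot.atBot_mul_const (by linarith)
          exact Real.tendsto_exp_atBot.comp h1
        have hev : ∀ᶠ t in atTop, Real.exp (-t * (1 + p1)) < ∫ z in a..m, w₀ z :=
          hexptend.eventually_lt_const hδ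
        filter_upwards [hev, eventually_ge_atTop (0:ℝ)] with t hlt ht
        by_contra hFa
        push_neg at hFa
        -- choose b close to 1 with F b t ≥ m
        have hbig : ∀ᶠ x in nhdsWithin (1:ℝ) (Set.Iio 1), m < F x t :=
          (hFlim t ht).eventually (eventually_gt_nhds hm1)
        have hIoo : Set.Ioo (0:ℝ) 1 ∈ nhdsWithin (1:ℝ) (Set.Iio 1) :=
          Ioo_mem_nhdsLT_of_mem ⟨one_pos, le_refl 1⟩
        obtain ⟨b, hbm, hbIoo⟩ := (hbig.and (eventually_mem_set.2 hIoo)).exists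
        have hbIco : b ∈ Set.Ico (0:ℝ) 1 := ⟨hbIoo.1.le, hbIoo.2⟩
        have hF0b : F 0 t ≤ F b t := (hFmono t ht).monotoneOn h0mem hbIco hbIoo.1.le
        have hsub2 : Set.Icc (F 0 t) (F b t) ⊆ Set.Ico (0:ℝ) 1 := fun x hx =>
          ⟨le_trans (hF0mem t ht).1 hx.1, lt_of_le_of_lt hx.2 (hFmaps t ht hbIco).2⟩
        have hfi : IntervalIntegrable w₀ volume (F 0 t) (F b t) := by
          refine ContinuousOn.intervalIntegrable ?_
          rw [Set.uIcc_of_le hF0b]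
          exact hw₀cont.mono hsub2
        have haef : (0:ℝ → ℝ) ≤ᵐ[volume.restrict (Set.Ioc (F 0 t) (F b t))] w₀ := by
          filter_upwards [ae_restrict_mem measurableSet_Ioc] with x hx
          exact hw₀nn x (hsub2 ⟨hx.1.le, hx.2⟩)
        have hchain : (∫ z in a..m, w₀ z) ≤ ∫ z in (F 0 t)..(F b t), w₀ z :=
          intervalIntegral.integral_mono_interval hFa ham.le hbm.le haef hfi
        linarith [key t ht b hbIco]
    · intro a ha
      filter_upwards [eventually_ge_atTop (0:ℝ)] with t ht
      exact lt_trans (hF0mem t ht).2 ha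
end

section
/- Let X be a [0,1]-valued random variable, and let φ : [0,1] → ℝ be concave with φ(0) = φ(1) = 0 and φ'(1) < 0. Suppose γ ∈ (0,1) is such that P(X > γ E[X]) ≥ 1/2. Then E[φ(X)] − φ'(1)E[X] ≥ (1/2)[φ(γE[X]) − φ'(1)γ E[X]]. -/
open Set MeasureTheory Filter Topology

/-- A concave function on `[0,1]` whose (one-sided) derivative at `1` is `0` is
nondecreasing on `[0,1]`. -/
lemma aux_slope_nonneg {g : ℝ → ℝ} (hg : ConcaveOn ℝ (Set.Icc 0 1) g)
    (hd : HasDerivWithinAt g 0 (Set.Icc 0 1) 1) {y : ℝ} (hy : y ∈ Set.Ico (0:ℝ) 1) :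
    0 ≤ (g 1 - g y) / (1 - y) := by
  have hT : Tendsto (slope g 1) (𝓝[Set.Icc (0:ℝ) 1 \ {1}] 1) (𝓝 0) :=
    hasDerivWithinAt_iff_tendsto_slope.mp hd
  have hset : Set.Icc (0:ℝ) 1 \ {1} = Set.Ico (0:ℝ) 1 := Set.Icc_sdiff_right
  rw [hset] at hT
  have hne : (𝓝[Set.Ico (0:ℝ) 1] (1:ℝ)).NeBot := by
    refine mem_closure_iff_nhdsWithin_neBot.mp ?_
    rw [closure_Ico (by norm_num : (0:ℝ) ≠ 1)]
    exact Set.right_mem_Icc.mpr (by norm_num)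
  -- the function t ↦ (g t - g y)/(t - y) tends to (g 1 - g y)/(1 - y)
  have hcont : ContinuousWithinAt g (Set.Icc (0:ℝ) 1) 1 := hd.continuousWithinAt
  have hF : Tendsto (fun t => (g t - g y) / (t - y)) (𝓝[Set.Ico (0:ℝ) 1] 1)
      (𝓝 ((g 1 - g y) / (1 - y))) := by
    apply Tendsto.div
    · exact ((hcont.mono Set.Ico_subset_Icc_self).tendsto).sub tendsto_const_nhds
    · exact (tendsto_id.sub tendsto_const_nhds).mono_left nhdsWithin_le_nhds
    · exact sub_ne_zero.mpr (ne_of_gt hy.2)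
  refine le_of_tendsto_of_tendsto hT hF ?_
  have hmem : ∀ᶠ t in 𝓝[Set.Ico (0:ℝ) 1] (1:ℝ), t ∈ Set.Ico (0:ℝ) 1 :=
    eventually_mem_nhdsWithin
  have hgt : ∀ᶠ t in 𝓝[Set.Ico (0:ℝ) 1] (1:ℝ), y < t :=
    eventually_nhdsWithin_of_eventually_nhds (eventually_gt_nhds hy.2)
  filter_upwards [hmem, hgt] with t ht hyt
  have h1 : slope g 1 t = (g 1 - g t) / (1 - t) := by
    rw [slope_comm, slope_def_field]
  rw [h1]
  have := hg.slope_anti_adjacent (x := y) (y := t) (z := 1)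
    ⟨hy.1, hy.2.le⟩ (Set.right_mem_Icc.mpr (by norm_num)) hyt ht.2
  exact this

lemma aux_mono {g : ℝ → ℝ} (hg : ConcaveOn ℝ (Set.Icc 0 1) g)
    (hd : HasDerivWithinAt g 0 (Set.Icc 0 1) 1) {x y : ℝ}
    (hx : x ∈ Set.Icc (0:ℝ) 1) (hy : y ∈ Set.Icc (0:ℝ) 1) (hxy : x ≤ y) : g x ≤ g y := by
  rcases eq_or_lt_of_le hxy with rfl | hlt
  · exact le_rfl
  rcases eq_or_lt_of_le hy.2 with rfl | hy1
  · -- y = 1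
    have h := aux_slope_nonneg hg hd ⟨hx.1, hlt⟩
    have hpos : (0:ℝ) < 1 - x := by linarith
    have h' := (le_div_iff₀ hpos).mp h
    linarith
  · -- y < 1
    have h1 := aux_slope_nonneg hg hd ⟨hy.1, hy1⟩
    have h2 := hg.slope_anti_adjacent (x := x) (y := y) (z := 1) hx
      (Set.right_mem_Icc.mpr (by norm_num)) hlt hy1
    have hpos : (0:ℝ) < y - x := by linarith
    have : 0 ≤ (g y - g x) / (y - x) := le_trans h1 h2
    have h' := (le_div_iff₀ hpos).mp this
    linarith

theorem stmt18 {Ω : Type*} [MeasurableSpace Ω] (μ : Measure Ω) [IsProbabilityMeasure μ]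
    (φ : ℝ → ℝ) (p1 : ℝ)
    (hφconc : ConcaveOn ℝ (Set.Icc 0 1) φ)
    (hφcont : ContinuousOn φ (Set.Icc 0 1))
    (hφ0 : φ 0 = 0) (hφ1 : φ 1 = 0)
    (hφd : HasDerivWithinAt φ p1 (Set.Icc 0 1) 1) (hp1 : p1 < 0)
    (X : Ω → ℝ) (hX : Measurable X)
    (hrange : ∀ ω, X ω ∈ Set.Icc (0:ℝ) 1)
    (hint : Integrable (fun ω => φ (X ω)) μ)
    (γ : ℝ) (hγ : γ ∈ Set.Ioo (0:ℝ) 1)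
    (hhalf : (1:ℝ)/2 ≤ (μ {ω | γ * (∫ ω', X ω' ∂μ) < X ω}).toReal) :
    (∫ ω, φ (X ω) ∂μ) - p1 * (∫ ω, X ω ∂μ)
      ≥ (1/2) * (φ (γ * (∫ ω, X ω ∂μ)) - p1 * (γ * (∫ ω, X ω ∂μ))) := by
  set g : ℝ → ℝ := fun t => φ t - p1 * t with hgdef
  have hlin : ConvexOn ℝ (Set.Icc 0 1) (fun t : ℝ => p1 * t) := by
    refine ⟨convex_Icc _ _, fun x _ y _ a b _ _ _ => le_of_eq ?_⟩
    simp [smul_eq_mul]; ring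
  have hgconc : ConcaveOn ℝ (Set.Icc 0 1) g := hφconc.sub hlin
  have hgd : HasDerivWithinAt g 0 (Set.Icc 0 1) 1 := by
    have : HasDerivWithinAt (fun t : ℝ => p1 * t) p1 (Set.Icc 0 1) 1 := by
      simpa using (hasDerivWithinAt_id (1:ℝ) (Set.Icc 0 1)).const_mul p1
    have h := hφd.sub this
    rw [sub_self] at h
    exact h
  have hg0 : g 0 = 0 := by simp [hgdef, hφ0]
  have hgnonneg : ∀ t ∈ Set.Icc (0:ℝ) 1, 0 ≤ g t := by
    intro t ht
    have := aux_mono hgconc hgd (Set.left_mem_Icc.mpr (by norm_num)) ht ht.1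
    rwa [hg0] at this
  have intX : Integrable X μ := by
    refine (integrable_const (1:ℝ)).mono' hX.aestronglyMeasurable ?_
    filter_upwards with ω
    rw [Real.norm_eq_abs, abs_of_nonneg (hrange ω).1]
    exact (hrange ω).2
  set I : ℝ := ∫ ω, X ω ∂μ with hIdef
  have hI0 : 0 ≤ I := integral_nonneg fun ω => (hrange ω).1
  have hI1 : I ≤ 1 := by
    have := integral_mono intX (integrable_const 1) fun ω => (hrange ω).2
    simpa using this
  set m : ℝ := γ * I with hmdef
  have hm : m ∈ Set.Icc (0:ℝ) 1 := by
    constructor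
    · exact mul_nonneg hγ.1.le hI0
    · calc γ * I ≤ 1 * 1 := mul_le_mul hγ.2.le hI1 hI0 (by norm_num)
        _ = 1 := by norm_num
  set S : Set Ω := {ω | m < X ω} with hSdef
  have hS : MeasurableSet S := measurableSet_lt measurable_const hX
  have key : (1/2) * g m ≤ ∫ ω, g (X ω) ∂μ := by
    have h1 : ∫ ω, S.indicator (fun _ => g m) ω ∂μ ≤ ∫ ω, g (X ω) ∂μ := by
      refine integral_mono ((integrable_const (g m)).indicator hS)
        (hint.sub (intX.const_mul p1)) ?_
      intro ω
      by_cases hω : ω ∈ S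
      · rw [Set.indicator_of_mem hω]
        exact aux_mono hgconc hgd hm (hrange ω) (le_of_lt hω)
      · rw [Set.indicator_of_notMem hω]
        exact hgnonneg _ (hrange ω)
    have h2 : ∫ ω, S.indicator (fun _ => g m) ω ∂μ = (μ S).toReal * g m := by
      rw [integral_indicator_const _ hS, smul_eq_mul]
      rfl
    have h3 : (1/2) * g m ≤ (μ S).toReal * g m :=
      mul_le_mul_of_nonneg_right hhalf (hgnonneg m hm)
    rw [h2] at h1
    exact le_trans h3 h1
  have hsplit : ∫ ω, g (X ω) ∂μ = (∫ ω, φ (X ω) ∂μ) - p1 * I := by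
    rw [hgdef]
    rw [integral_sub hint (intX.const_mul p1), integral_const_mul]
  rw [hsplit] at key
  simpa [hgdef, hmdef, hIdef, ge_iff_le] using key
end
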